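/- Let a, b > 0, p := a/(a+b), c_{a,b} := (a+b)/(a+1), and define for x ∈ [0,1): Q_{a,b}^{[S,2]}(x) := (1−x)^b/(1 − c_{a,b} x) if x ∈ [0,p], and Q_{a,b}^{[S,2]}(x) := (a+1)(1−p)^b if x ∈ [p,1). Then for all x ∈ [0,1): if b ≤ 1 then Q_{a,b}(x) ≥ Q_{a,b}^{[S,2]}(x), and if b ≥ 1 then Q_{a,b}(x) ≤ Q_{a,b}^{[S,2]}(x). -/

import Mathlib

open MeasureTheory

/-- The auxiliary function `Q_{a,b}(x) = a ∫₀¹ y^(a-1) (1-xy)^(b-1) dy`. -/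
noncomputable def Q (a b x : ℝ) : ℝ :=
  a * ∫ y in (0:ℝ)..1, y ^ (a - 1) * (1 - x * y) ^ (b - 1)

/-!
Differentiating `y ^ a * (1 - x * y) ^ b` and integrating over `[0, 1]` gives, with
`c = (a + b) / (a + 1)`,
`Q a b x * (1 - c * x) = (1 - x) ^ b + c * x * ∫₀¹ w(y) (1 - x * y) ^ (b - 1) dy`,
where `w = (y ^ (a + 1) - y ^ a)'` has total mass zero and changes sign once, at `a / (a + 1)`.
Since `y ↦ (1 - x * y) ^ (b - 1)` is increasing for `b ≤ 1` and decreasing for `b ≥ 1`, a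
Chebyshev-type argument fixes the sign of the integral; this is the bound for `x ≤ p`.
For `x ≥ p`, the bound at `p` equals `(a + 1) * (1 - p) ^ b`, and `Q` is monotone in `x` in the
matching direction.
-/

open Set

theorem integral_mul_nonneg_of_monotoneOn {f g : ℝ → ℝ} {l u c : ℝ}
    (hlc : l ≤ c) (hcu : c ≤ u)
    (hf : IntervalIntegrable f volume l u)
    (hfg : IntervalIntegrable (fun y => f y * g y) volume l u)
    (hf_zero : ∫ y in l..u, f y = 0)
    (hf_nonpos : ∀ y ∈ Icc l c, f y ≤ 0) (hf_nonneg : ∀ y ∈ Icc c u, 0 ≤ f y)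
    (hg : MonotoneOn g (Icc l u)) :
    0 ≤ ∫ y in l..u, f y * g y := by
  have hshift : ∫ y in l..u, f y * g y = ∫ y in l..u, f y * (g y - g c) := by
    simp_rw [mul_sub]
    rw [intervalIntegral.integral_sub hfg (hf.mul_const _), intervalIntegral.integral_mul_const,
      hf_zero, zero_mul, sub_zero]
  rw [hshift]
  refine intervalIntegral.integral_nonneg (hlc.trans hcu) fun y hy => ?_
  rcases le_total y c with hyc | hcy
  · exact mul_nonneg_of_nonpos_of_nonpos (hf_nonpos y ⟨hy.1, hyc⟩)
      (sub_nonpos.2 (hg hy ⟨hlc, hcu⟩ hyc))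
  · exact mul_nonneg (hf_nonneg y ⟨hcy, hy.2⟩) (sub_nonneg.2 (hg ⟨hlc, hcu⟩ hy hcy))

theorem integral_mul_nonpos_of_antitoneOn {f g : ℝ → ℝ} {l u c : ℝ}
    (hlc : l ≤ c) (hcu : c ≤ u)
    (hf : IntervalIntegrable f volume l u)
    (hfg : IntervalIntegrable (fun y => f y * g y) volume l u)
    (hf_zero : ∫ y in l..u, f y = 0)
    (hf_nonpos : ∀ y ∈ Icc l c, f y ≤ 0) (hf_nonneg : ∀ y ∈ Icc c u, 0 ≤ f y)
    (hg : AntitoneOn g (Icc l u)) :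
    ∫ y in l..u, f y * g y ≤ 0 := by
  have h := integral_mul_nonneg_of_monotoneOn hlc hcu hf
    (by simpa only [Pi.neg_def, mul_neg] using hfg.neg) hf_zero hf_nonpos hf_nonneg hg.neg
  simpa only [Pi.neg_apply, mul_neg, intervalIntegral.integral_neg, neg_nonneg] using h

section

variable {a b s t t' x : ℝ}

theorem one_sub_mul_pos (hx0 : 0 ≤ x) (hx1 : x < 1) {y : ℝ} (hy : y ∈ Icc (0:ℝ) 1) :
    0 < 1 - x * y := by nlinarith [hy.1, hy.2]

theorem one_sub_mul_rpow_le_of_le_one (hb : b ≤ 1) (hs : 0 ≤ s) (ht : t ≤ t')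
    (hpos : 0 < 1 - s * t') : (1 - s * t) ^ (b - 1) ≤ (1 - s * t') ^ (b - 1) :=
  Real.rpow_le_rpow_of_nonpos hpos (by nlinarith) (by linarith)

theorem one_sub_mul_rpow_le_of_one_le (hb : 1 ≤ b) (hs : 0 ≤ s) (ht : t ≤ t')
    (hpos : 0 < 1 - s * t') : (1 - s * t') ^ (b - 1) ≤ (1 - s * t) ^ (b - 1) :=
  Real.rpow_le_rpow hpos.le (by nlinarith) (by linarith)

theorem continuousOn_one_sub_mul_rpow (hx0 : 0 ≤ x) (hx1 : x < 1) (d : ℝ) :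
    ContinuousOn (fun y => (1 - x * y) ^ d) (uIcc 0 1) := by
  rw [uIcc_of_le zero_le_one]
  exact (continuousOn_const.sub (continuousOn_const.mul continuousOn_id)).rpow_const
    fun y hy => Or.inl (one_sub_mul_pos hx0 hx1 hy).ne'

theorem intervalIntegrable_rpow_mul_one_sub_mul_rpow {c : ℝ} (hc : -1 < c) (hx0 : 0 ≤ x)
    (hx1 : x < 1) (d : ℝ) :
    IntervalIntegrable (fun y => y ^ c * (1 - x * y) ^ d) volume 0 1 :=
  (intervalIntegral.intervalIntegrable_rpow' hc).mul_continuousOn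
    (continuousOn_one_sub_mul_rpow hx0 hx1 d)

theorem hasDerivAt_rpow_mul_one_sub_mul_rpow {y : ℝ} (hy : 0 < y) (hxy : 0 < 1 - x * y) :
    HasDerivAt (fun y => y ^ a * (1 - x * y) ^ b)
      (a * (y ^ (a - 1) * (1 - x * y) ^ (b - 1))
        - (a + b) * x * (y ^ a * (1 - x * y) ^ (b - 1))) y := by
  have hya : y ^ a = y ^ (a - 1) * y := by
    rw [← Real.rpow_add_one hy.ne']; ring_nf
  have hxyb : (1 - x * y) ^ b = (1 - x * y) ^ (b - 1) * (1 - x * y) := by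
    rw [← Real.rpow_add_one hxy.ne']; ring_nf
  have hpow := Real.hasDerivAt_rpow_const (p := a) (Or.inl hy.ne')
  have hbase := (((hasDerivAt_id y).const_mul x).const_sub 1).rpow_const (p := b) (Or.inl hxy.ne')
  refine (hpow.mul hbase).congr_deriv ?_
  rw [id, hya, hxyb]
  ring

theorem Q_eq_one_sub_rpow_add (ha : 0 < a) (hx0 : 0 ≤ x) (hx1 : x < 1) :
    Q a b x = (1 - x) ^ b + (a + b) * x * ∫ y in (0:ℝ)..1, y ^ a * (1 - x * y) ^ (b - 1) := by
  have hJ := intervalIntegrable_rpow_mul_one_sub_mul_rpow (by linarith : -1 < a - 1) hx0 hx1 (b - 1)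
  have hI := intervalIntegrable_rpow_mul_one_sub_mul_rpow (by linarith : -1 < a) hx0 hx1 (b - 1)
  have hftc := intervalIntegral.integral_eq_sub_of_hasDerivAt_of_le
    (f := fun y => y ^ a * (1 - x * y) ^ b) zero_le_one
    ((continuousOn_id.rpow_const fun _ _ => Or.inr ha.le).mul
      (uIcc_of_le (zero_le_one' ℝ) ▸ continuousOn_one_sub_mul_rpow hx0 hx1 b))
    (fun y hy => hasDerivAt_rpow_mul_one_sub_mul_rpow hy.1
      (one_sub_mul_pos hx0 hx1 (Ioo_subset_Icc_self hy)))
    ((hJ.const_mul a).sub (hI.const_mul ((a + b) * x)))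
  rw [intervalIntegral.integral_sub (hJ.const_mul a) (hI.const_mul _),
    intervalIntegral.integral_const_mul, intervalIntegral.integral_const_mul] at hftc
  simp only [Real.zero_rpow ha.ne', Real.one_rpow, mul_one, mul_zero, sub_zero] at hftc
  rw [Q]
  linarith

/-- The derivative of `y ^ (a + 1) - y ^ a`. -/
noncomputable def betaWeight (a y : ℝ) : ℝ := (a + 1) * y ^ a - a * y ^ (a - 1)

theorem intervalIntegrable_betaWeight (ha : 0 < a) :
    IntervalIntegrable (betaWeight a) volume 0 1 :=
  ((intervalIntegral.intervalIntegrable_rpow' (by linarith)).const_mul _).sub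
    ((intervalIntegral.intervalIntegrable_rpow' (by linarith)).const_mul _)

theorem integral_betaWeight (ha : 0 < a) : ∫ y in (0:ℝ)..1, betaWeight a y = 0 := by
  have ha1 : a + 1 ≠ 0 := by linarith
  unfold betaWeight
  rw [intervalIntegral.integral_sub
      ((intervalIntegral.intervalIntegrable_rpow' (by linarith)).const_mul _)
      ((intervalIntegral.intervalIntegrable_rpow' (by linarith)).const_mul _),
    intervalIntegral.integral_const_mul, intervalIntegral.integral_const_mul,
    integral_rpow (Or.inl (by linarith)), integral_rpow (Or.inl (by linarith)),
    sub_add_cancel, Real.zero_rpow ha1, Real.zero_rpow ha.ne', Real.one_rpow, Real.one_rpow]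
  field_simp
  ring

theorem betaWeight_eq_rpow_mul (ha : 0 < a) {y : ℝ} (hy : 0 ≤ y) :
    betaWeight a y = y ^ (a - 1) * ((a + 1) * y - a) := by
  have hya : y ^ a = y ^ (a - 1) * y := by
    rw [← Real.rpow_add_one' hy (by linarith), sub_add_cancel]
  rw [betaWeight, hya]
  ring

theorem betaWeight_nonpos (ha : 0 < a) {y : ℝ} (hy0 : 0 ≤ y) (hy : y ≤ a / (a + 1)) :
    betaWeight a y ≤ 0 := by
  rw [le_div_iff₀ (by linarith)] at hy
  rw [betaWeight_eq_rpow_mul ha hy0]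
  exact mul_nonpos_of_nonneg_of_nonpos (Real.rpow_nonneg hy0 _) (by linarith)

theorem betaWeight_nonneg (ha : 0 < a) {y : ℝ} (hy : a / (a + 1) ≤ y) :
    0 ≤ betaWeight a y := by
  have hy0 : 0 ≤ y := (div_nonneg ha.le (by linarith)).trans hy
  rw [div_le_iff₀ (by linarith)] at hy
  rw [betaWeight_eq_rpow_mul ha hy0]
  exact mul_nonneg (Real.rpow_nonneg hy0 _) (by linarith)

theorem Q_mul_one_sub_eq (ha : 0 < a) (hx0 : 0 ≤ x) (hx1 : x < 1) :
    Q a b x * (1 - (a + b) / (a + 1) * x) =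
      (1 - x) ^ b +
        (a + b) / (a + 1) * x * ∫ y in (0:ℝ)..1, betaWeight a y * (1 - x * y) ^ (b - 1) := by
  have hJ := intervalIntegrable_rpow_mul_one_sub_mul_rpow (by linarith : -1 < a - 1) hx0 hx1 (b - 1)
  have hI := intervalIntegrable_rpow_mul_one_sub_mul_rpow (by linarith : -1 < a) hx0 hx1 (b - 1)
  have hW : ∫ y in (0:ℝ)..1, betaWeight a y * (1 - x * y) ^ (b - 1) =
      (a + 1) * (∫ y in (0:ℝ)..1, y ^ a * (1 - x * y) ^ (b - 1)) - Q a b x := by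
    unfold betaWeight Q
    simp_rw [sub_mul, mul_assoc]
    rw [intervalIntegral.integral_sub (hI.const_mul _) (hJ.const_mul _),
      intervalIntegral.integral_const_mul, intervalIntegral.integral_const_mul]
  have hQ := Q_eq_one_sub_rpow_add (b := b) ha hx0 hx1
  rw [hW]
  field_simp
  linear_combination (a + 1) * hQ

theorem integral_betaWeight_mul_nonneg (ha : 0 < a) (hb : b ≤ 1) (hx0 : 0 ≤ x) (hx1 : x < 1) :
    0 ≤ ∫ y in (0:ℝ)..1, betaWeight a y * (1 - x * y) ^ (b - 1) := by
  refine integral_mul_nonneg_of_monotoneOn (c := a / (a + 1)) (by positivity)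
    ((div_le_one (by linarith)).2 (by linarith)) (intervalIntegrable_betaWeight ha)
    ((intervalIntegrable_betaWeight ha).mul_continuousOn (continuousOn_one_sub_mul_rpow hx0 hx1 _))
    (integral_betaWeight ha) (fun y hy => betaWeight_nonpos ha hy.1 hy.2)
    (fun y hy => betaWeight_nonneg ha hy.1) ?_
  exact fun s _ t ht hst => one_sub_mul_rpow_le_of_le_one hb hx0 hst (one_sub_mul_pos hx0 hx1 ht)

theorem integral_betaWeight_mul_nonpos (ha : 0 < a) (hb : 1 ≤ b) (hx0 : 0 ≤ x) (hx1 : x < 1) :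
    ∫ y in (0:ℝ)..1, betaWeight a y * (1 - x * y) ^ (b - 1) ≤ 0 := by
  refine integral_mul_nonpos_of_antitoneOn (c := a / (a + 1)) (by positivity)
    ((div_le_one (by linarith)).2 (by linarith)) (intervalIntegrable_betaWeight ha)
    ((intervalIntegrable_betaWeight ha).mul_continuousOn (continuousOn_one_sub_mul_rpow hx0 hx1 _))
    (integral_betaWeight ha) (fun y hy => betaWeight_nonpos ha hy.1 hy.2)
    (fun y hy => betaWeight_nonneg ha hy.1) ?_
  exact fun s _ t ht hst => one_sub_mul_rpow_le_of_one_le hb hx0 hst (one_sub_mul_pos hx0 hx1 ht)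

theorem Q_monotoneOn (ha : 0 < a) (hb : b ≤ 1) : MonotoneOn (Q a b) (Ico 0 1) := by
  intro x hx x' hx' hxx
  refine mul_le_mul_of_nonneg_left (intervalIntegral.integral_mono_on zero_le_one
    (intervalIntegrable_rpow_mul_one_sub_mul_rpow (by linarith) hx.1 hx.2 _)
    (intervalIntegrable_rpow_mul_one_sub_mul_rpow (by linarith) hx'.1 hx'.2 _)
    fun y hy => mul_le_mul_of_nonneg_left ?_ (Real.rpow_nonneg hy.1 _)) ha.le
  rw [mul_comm x, mul_comm x']
  exact one_sub_mul_rpow_le_of_le_one hb hy.1 hxx (mul_comm x' y ▸ one_sub_mul_pos hx'.1 hx'.2 hy)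

theorem Q_antitoneOn (ha : 0 < a) (hb : 1 ≤ b) : AntitoneOn (Q a b) (Ico 0 1) := by
  intro x hx x' hx' hxx
  refine mul_le_mul_of_nonneg_left (intervalIntegral.integral_mono_on zero_le_one
    (intervalIntegrable_rpow_mul_one_sub_mul_rpow (by linarith) hx'.1 hx'.2 _)
    (intervalIntegrable_rpow_mul_one_sub_mul_rpow (by linarith) hx.1 hx.2 _)
    fun y hy => mul_le_mul_of_nonneg_left ?_ (Real.rpow_nonneg hy.1 _)) ha.le
  rw [mul_comm x, mul_comm x']
  exact one_sub_mul_rpow_le_of_one_le hb hy.1 hxx (mul_comm x' y ▸ one_sub_mul_pos hx'.1 hx'.2 hy)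

theorem one_sub_div_add_mul_pos (ha : 0 < a) (hb : 0 < b) (hxp : x ≤ a / (a + b)) :
    0 < 1 - (a + b) / (a + 1) * x := by
  have hc : (a + b) / (a + 1) * (a / (a + b)) < 1 := by
    rw [div_mul_div_cancel₀' (by linarith), div_lt_one (by linarith)]
    linarith
  nlinarith [mul_le_mul_of_nonneg_left hxp (by positivity : 0 ≤ (a + b) / (a + 1))]

theorem div_le_Q (ha : 0 < a) (hb : 0 < b) (hb1 : b ≤ 1) (hx0 : 0 ≤ x)
    (hxp : x ≤ a / (a + b)) : (1 - x) ^ b / (1 - (a + b) / (a + 1) * x) ≤ Q a b x := by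
  have hx1 : x < 1 := hxp.trans_lt ((div_lt_one (by linarith)).2 (by linarith))
  rw [div_le_iff₀ (one_sub_div_add_mul_pos ha hb hxp), Q_mul_one_sub_eq ha hx0 hx1]
  have := integral_betaWeight_mul_nonneg ha hb1 hx0 hx1
  have : 0 ≤ (a + b) / (a + 1) * x := by positivity
  nlinarith

theorem Q_le_div (ha : 0 < a) (hb : 0 < b) (hb1 : 1 ≤ b) (hx0 : 0 ≤ x)
    (hxp : x ≤ a / (a + b)) : Q a b x ≤ (1 - x) ^ b / (1 - (a + b) / (a + 1) * x) := by
  have hx1 : x < 1 := hxp.trans_lt ((div_lt_one (by linarith)).2 (by linarith))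
  rw [le_div_iff₀ (one_sub_div_add_mul_pos ha hb hxp), Q_mul_one_sub_eq ha hx0 hx1]
  have := integral_betaWeight_mul_nonpos ha hb1 hx0 hx1
  have : 0 ≤ (a + b) / (a + 1) * x := by positivity
  nlinarith

theorem one_sub_mean_rpow_div_eq (ha : 0 < a) (hb : 0 < b) :
    (1 - a / (a + b)) ^ b / (1 - (a + b) / (a + 1) * (a / (a + b))) =
      (a + 1) * (1 - a / (a + b)) ^ b := by
  rw [div_mul_div_cancel₀' (by linarith)]
  field_simp
  ring

end

theorem beta_QS2_bounds (a b : ℝ) (ha : 0 < a) (hb : 0 < b)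
    (x : ℝ) (hx : x ∈ Set.Ico (0:ℝ) 1) :
    (b ≤ 1 →
      (if x ≤ a / (a + b) then (1 - x) ^ b / (1 - (a + b) / (a + 1) * x)
        else (a + 1) * (1 - a / (a + b)) ^ b) ≤ Q a b x) ∧
    (1 ≤ b →
      Q a b x ≤
      (if x ≤ a / (a + b) then (1 - x) ^ b / (1 - (a + b) / (a + 1) * x)
        else (a + 1) * (1 - a / (a + b)) ^ b)) := by
  split_ifs with hxp
  · exact ⟨fun hb1 => div_le_Q ha hb hb1 hx.1 hxp, fun hb1 => Q_le_div ha hb hb1 hx.1 hxp⟩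
  · have hp : a / (a + b) ∈ Ico (0:ℝ) 1 :=
      ⟨by positivity, (div_lt_one (by linarith)).2 (by linarith)⟩
    have hpx : a / (a + b) ≤ x := (not_le.1 hxp).le
    rw [← one_sub_mean_rpow_div_eq ha hb]
    exact ⟨fun hb1 => (div_le_Q ha hb hb1 hp.1 le_rfl).trans (Q_monotoneOn ha hb1 hp hx hpx),
      fun hb1 => (Q_antitoneOn ha hb1 hp hx hpx).trans (Q_le_div ha hb hb1 hp.1 le_rfl)⟩
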